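/- arXiv:1008.1347 — 2 statements merged into one kernel-verified Lean document; each statement's English description precedes it below -/
import Mathlib

section
/- Let T : S_n(ℝ) → S_n(ℝ) be a linear transformation such that T(A) is positive definite whenever A is positive definite, and such that for every A ∈ S_n(ℝ), if T(A) is positive definite then A is positive definite. Then rank T(E_ii) = 1 for every i = 1, …, n. -/
open Matrix

/-- The space `Sₙ(ℝ)` of `n × n` real symmetric matrices, as a submodule of the space of
all `n × n` real matrices. -/
def SymMat (n : ℕ) : Submodule ℝ (Matrix (Fin n) (Fin n) ℝ) where
  carrier := {A | A.IsSymm}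
  add_mem' := fun ha hb => ha.add hb
  zero_mem' := by simp [Matrix.IsSymm]
  smul_mem' := fun c _ hA => hA.smul c

/-- The matrix unit `E_ii`, as an element of `Sₙ(ℝ)`. -/
def symE (n : ℕ) (i : Fin n) : SymMat n :=
  ⟨Matrix.single i i 1,
    Matrix.IsSymm.ext fun a b => by simp [Matrix.single, and_comm]⟩

/-! Perturbing by `ε • 1` and letting `ε → 0` shows that `T` maps positive semidefinite
matrices to positive semidefinite ones and reflects positive semidefiniteness. Hence `T` is
injective (its kernel consists of matrices `A` with `0 ≤ A ≤ 0`), so bijective, and an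
automorphism of the Loewner order. Every `0 ≤ A ≤ E_ii` is a multiple of `E_ii`, so every
`0 ≤ B ≤ P := T(E_ii)` is a multiple of `P`. If `P v ≠ 0`, Cauchy–Schwarz makes the rank-one
matrix `(P v)(P v)ᵀ / (vᵀ P v)` such a `B`, and therefore `P` has rank one. -/

open Filter Topology
open scoped MatrixOrder

namespace Matrix

lemma rank_pos_of_mulVec_ne_zero {m n K : Type*} [Fintype n] [Field K]
    {A : Matrix m n K} {v : n → K} (h : A *ᵥ v ≠ 0) : 0 < A.rank :=
  Module.finrank_pos_iff_exists_ne_zero.2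
    ⟨⟨A *ᵥ v, LinearMap.mem_range_self _ v⟩, fun h₀ => h (congrArg Subtype.val h₀)⟩

variable {m : Type*} [Fintype m]

lemma posSemidef_vecMulVec_self (w : m → ℝ) : (vecMulVec w w).PosSemidef := by
  simpa using posSemidef_vecMulVec_self_star w

lemma posSemidef_of_forall_posDef_add_smul {A Q : Matrix m m ℝ} (hA : A.IsHermitian)
    (h : ∀ ε : ℝ, 0 < ε → (A + ε • Q).PosDef) : A.PosSemidef := by
  refine posSemidef_iff_dotProduct_mulVec.2 ⟨hA, fun x => ?_⟩
  have hlim : Tendsto (fun ε : ℝ => star x ⬝ᵥ (A + ε • Q) *ᵥ x) (𝓝[>] 0)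
      (𝓝 (star x ⬝ᵥ A *ᵥ x)) := by
    simp only [add_mulVec, smul_mulVec, dotProduct_add, dotProduct_smul, smul_eq_mul]
    exact (Continuous.tendsto' (by fun_prop) 0 _ (by simp)).mono_left nhdsWithin_le_nhds
  refine ge_of_tendsto hlim (eventually_nhdsWithin_of_forall fun ε hε => ?_)
  exact (h ε hε).posSemidef.dotProduct_mulVec_nonneg x

lemma PosSemidef.dotProduct_mulVec_sq_le {P : Matrix m m ℝ} (hP : P.PosSemidef)
    (x y : m → ℝ) : (x ⬝ᵥ P *ᵥ y) ^ 2 ≤ (x ⬝ᵥ P *ᵥ x) * (y ⬝ᵥ P *ᵥ y) := by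
  classical
  have hCS := LinearMap.BilinForm.apply_mul_apply_le_of_forall_zero_le (toLinearMap₂' ℝ P)
    (fun x => by simpa [toLinearMap₂'_apply'] using hP.dotProduct_mulVec_nonneg x) x y
  have hsymm : y ⬝ᵥ P *ᵥ x = x ⬝ᵥ P *ᵥ y := by
    rw [dotProduct_mulVec, ← mulVec_transpose, (isHermitian_iff_isSymm.1 hP.1).eq,
      dotProduct_comm]
  simpa only [toLinearMap₂'_apply', hsymm, ← sq] using hCS

/-- If `v ⬝ᵥ P *ᵥ v = 0`, the left-hand side is `0` since `0⁻¹ = 0`. -/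
lemma smul_vecMulVec_mulVec_le {P : Matrix m m ℝ} (hP : 0 ≤ P) (v : m → ℝ) :
    (v ⬝ᵥ P *ᵥ v)⁻¹ • vecMulVec (P *ᵥ v) (P *ᵥ v) ≤ P := by
  have hP := hP.posSemidef
  have hherm :=
    hP.1.sub ((posSemidef_vecMulVec_self (P *ᵥ v)).1.smul (.all (v ⬝ᵥ P *ᵥ v)⁻¹))
  refine le_iff.2 (posSemidef_iff_dotProduct_mulVec.2 ⟨hherm, fun x => ?_⟩)
  simp only [star_trivial, sub_mulVec, smul_mulVec, vecMulVec_mulVec, dotProduct_sub,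
    dotProduct_smul, op_smul_eq_mul, smul_eq_mul, dotProduct_comm (P *ᵥ v) x]
  rw [sub_nonneg, ← sq, inv_mul_eq_div]
  exact div_le_of_le_mul₀ (hP.dotProduct_mulVec_nonneg v) (hP.dotProduct_mulVec_nonneg x)
    (hP.dotProduct_mulVec_sq_le x v)

lemma rank_eq_one_of_forall_le_eq_smul {P : Matrix m m ℝ} (hP : 0 ≤ P) (hP₀ : P ≠ 0)
    (h : ∀ B, 0 ≤ B → B ≤ P → ∃ c : ℝ, B = c • P) : P.rank = 1 := by
  obtain ⟨v, hv⟩ : ∃ v, P *ᵥ v ≠ 0 := by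
    by_contra! h₀
    exact hP₀ (ext_iff_mulVec.2 (by simpa using h₀))
  set d := v ⬝ᵥ P *ᵥ v
  have hd : d ≠ 0 := fun hd =>
    hv ((hP.posSemidef.dotProduct_mulVec_zero_iff v).1 (by simpa using hd))
  set B := d⁻¹ • vecMulVec (P *ᵥ v) (P *ᵥ v)
  have hB : 0 ≤ B := ((posSemidef_vecMulVec_self _).smul
    (inv_nonneg.2 (hP.posSemidef.dotProduct_mulVec_nonneg v))).nonneg
  obtain ⟨c, hc⟩ := h B hB (smul_vecMulVec_mulVec_le hP v)
  have hBv : B *ᵥ v = P *ᵥ v := by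
    rw [smul_mulVec, vecMulVec_mulVec, op_smul_eq_smul, dotProduct_comm, smul_smul,
      inv_mul_cancel₀ hd, one_smul]
  have hc₀ : c ≠ 0 := by
    rintro rfl
    simp only [hc, zero_smul, zero_mulVec] at hBv
    exact hv hBv.symm
  have hPB : P = c⁻¹ • B := by rw [hc, smul_smul, inv_mul_cancel₀ hc₀, one_smul]
  refine le_antisymm ?_ (rank_pos_of_mulVec_ne_zero hv)
  rw [hPB]
  simp only [B, ← smul_vecMulVec]
  exact rank_vecMulVec_le _ _

lemma eq_smul_single_of_nonneg_of_le_single [DecidableEq m] {A : Matrix m m ℝ} {i : m}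
    (hA : 0 ≤ A) (hAi : A ≤ single i i 1) : A = A i i • single i i 1 := by
  have hA := hA.posSemidef
  have hcol (j : m) (hj : j ≠ i) : A *ᵥ Pi.single j 1 = 0 := by
    refine (hA.dotProduct_mulVec_zero_iff _).1 (le_antisymm ?_ ?_)
    · simpa [single_apply, hj.symm] using (le_iff.1 hAi).diag_nonneg (i := j)
    · simpa using hA.diag_nonneg (i := j)
  have hzero (k j : m) (hj : j ≠ i) : A k j = 0 := by
    simpa using congrFun (hcol j hj) k
  ext k l
  by_cases hl : l = i
  · subst hl
    by_cases hk : k = l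
    · simp [hk]
    · rw [← hA.1.apply, star_trivial, hzero l k hk]
      simp [Ne.symm hk]
  · simp [hzero k l hl, Ne.symm hl]

end Matrix

namespace SymMat

variable {n : ℕ}

lemma isHermitian (A : SymMat n) : A.1.IsHermitian := isHermitian_iff_isSymm.2 A.2

lemma posSemidef_symE (i : Fin n) : (symE n i).1.PosSemidef := by
  simpa [symE, single_eq_single_vecMulVec_single] using
    posSemidef_vecMulVec_self (Pi.single i (1 : ℝ))

lemma symE_ne_zero (i : Fin n) : symE n i ≠ 0 := fun h => by
  simpa [symE] using congrFun (congrFun (congrArg Subtype.val h) i) i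

def one (n : ℕ) : SymMat n := ⟨1, isSymm_one⟩

variable {T : SymMat n →ₗ[ℝ] SymMat n}

lemma map_posSemidef (hT : ∀ A : SymMat n, A.1.PosDef → (T A).1.PosDef) {A : SymMat n}
    (hA : A.1.PosSemidef) : (T A).1.PosSemidef := by
  refine posSemidef_of_forall_posDef_add_smul (Q := (T (one n)).1) (isHermitian _)
    fun ε hε => ?_
  simpa using hT (A + ε • one n) (PosDef.posSemidef_add hA (PosDef.one.smul hε))

lemma posSemidef_of_map_posSemidef (hT : ∀ A : SymMat n, A.1.PosDef → (T A).1.PosDef)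
    (hT' : ∀ A : SymMat n, (T A).1.PosDef → A.1.PosDef) {A : SymMat n}
    (hA : (T A).1.PosSemidef) : A.1.PosSemidef := by
  refine posSemidef_of_forall_posDef_add_smul (Q := 1) (isHermitian _) fun ε hε => ?_
  have hpos := PosDef.posSemidef_add hA ((hT (one n) PosDef.one).smul hε)
  simpa [one] using hT' (A + ε • one n) (by simpa using hpos)

lemma injective_of_posDef_iff (hT : ∀ A : SymMat n, A.1.PosDef → (T A).1.PosDef)
    (hT' : ∀ A : SymMat n, (T A).1.PosDef → A.1.PosDef) : Function.Injective T := by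
  have hker {A : SymMat n} (hA : T A = 0) : 0 ≤ A.1 :=
    (posSemidef_of_map_posSemidef hT hT' (by simp [hA, PosSemidef.zero])).nonneg
  refine (injective_iff_map_eq_zero T).2 fun A hA => Subtype.ext (le_antisymm ?_ (hker hA))
  simpa using hker (A := -A) (by simp [hA])

lemma exists_eq_smul_map_symE_of_le (hT : ∀ A : SymMat n, A.1.PosDef → (T A).1.PosDef)
    (hT' : ∀ A : SymMat n, (T A).1.PosDef → A.1.PosDef) (i : Fin n)
    {B : Matrix (Fin n) (Fin n) ℝ} (hB : 0 ≤ B) (hBT : B ≤ (T (symE n i)).1) :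
    ∃ c : ℝ, B = c • (T (symE n i)).1 := by
  obtain ⟨A, hA⟩ := LinearMap.injective_iff_surjective.1 (injective_of_posDef_iff hT hT')
    ⟨B, isHermitian_iff_isSymm.1 hB.posSemidef.1⟩
  have hA₀ : 0 ≤ A.1 :=
    (posSemidef_of_map_posSemidef hT hT' (by simpa [hA] using hB.posSemidef)).nonneg
  have hAE : A.1 ≤ single i i 1 := le_iff.2 <|
    posSemidef_of_map_posSemidef hT hT' (A := symE n i - A) (by simpa [hA] using le_iff.1 hBT)
  obtain ⟨c, hc⟩ : ∃ c : ℝ, A = c • symE n i :=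
    ⟨_, Subtype.ext (eq_smul_single_of_nonneg_of_le_single hA₀ hAE)⟩
  refine ⟨c, ?_⟩
  rw [show B = (T A).1 by rw [hA], hc, map_smul]
  rfl

end SymMat

/-- Let `T : Sₙ(ℝ) → Sₙ(ℝ)` be linear, such that `T(A)` is positive
definite whenever `A` is positive definite, and such that `T(A)` positive definite implies
`A` positive definite.  Then `rank T(E_ii) = 1` for every `i`. -/
theorem stmt9 (n : ℕ) (T : SymMat n →ₗ[ℝ] SymMat n)
    (hT : ∀ A : SymMat n, (A : Matrix (Fin n) (Fin n) ℝ).PosDef →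
      ((T A : Matrix (Fin n) (Fin n) ℝ)).PosDef)
    (hT' : ∀ A : SymMat n, ((T A : Matrix (Fin n) (Fin n) ℝ)).PosDef →
      (A : Matrix (Fin n) (Fin n) ℝ).PosDef) :
    ∀ i : Fin n, ((T (symE n i) : Matrix (Fin n) (Fin n) ℝ)).rank = 1 := by
  intro i
  have hP : 0 ≤ (T (symE n i)).1 := (SymMat.map_posSemidef hT (SymMat.posSemidef_symE i)).nonneg
  have hP₀ : (T (symE n i)).1 ≠ 0 := fun h =>
    SymMat.symE_ne_zero i (SymMat.injective_of_posDef_iff hT hT' (Subtype.ext (by simpa using h)))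
  exact rank_eq_one_of_forall_le_eq_smul hP hP₀ fun B hB hBT =>
    SymMat.exists_eq_smul_map_symE_of_le hT hT' i hB hBT
end

section
/- Let T : S_n(ℝ) → S_n(ℝ) be a linear transformation such that T(A) is positive definite whenever A is positive definite, and such that T(E_kk) = E_kk for every k = 1, …, n. Fix i ≠ j and set A = T(E_ij + E_ji). Then for every vector y = (y_1, …, y_n) ∈ ℝ^n with y_i = 0, one has ⟨A y, y⟩ = 0. -/
/-!
The matrix `M = (2/ε) E_ii + ε I ± (E_ij + E_ji)` is positive definite (complete the square in
the coordinates `i, j`). As `T` fixes every `E_kk`, hence also `I = ∑ E_kk`, we get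
`T M = (2/ε) E_ii + ε I ± A`, and its quadratic form at a vector `y` with `y_i = 0` is
`ε ⟨y, y⟩ ± ⟨A y, y⟩ ≥ 0`. Letting `ε → 0` gives `⟨A y, y⟩ = 0`.
-/

open Matrix

/-- The symmetric matrix `E_ij + E_ji`, as an element of `Sₙ(ℝ)`. -/
def symEE (n : ℕ) (i j : Fin n) : SymMat n :=
  ⟨Matrix.single i j 1 + Matrix.single j i 1,
    Matrix.IsSymm.ext fun a b => by
      simp only [Matrix.add_apply, Matrix.single, Matrix.of_apply]
      by_cases hia : i = a <;> by_cases hjb : j = b <;> by_cases hja : j = a <;>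
        by_cases hib : i = b <;> simp_all⟩

section

variable {ι R : Type*} [Fintype ι] [DecidableEq ι] [CommSemiring R]

lemma dotProduct_single_one_mulVec (x : ι → R) (i j : ι) :
    x ⬝ᵥ (single i j (1 : R) *ᵥ x) = x i * x j := by
  simp [single_mulVec, dotProduct, Function.update_apply, mul_comm]

lemma dotProduct_mulVec_smul_single_add_smul_one_add_smul (x : ι → R) (i : ι) (a ε c : R)
    (B : Matrix ι ι R) :
    x ⬝ᵥ ((a • single i i 1 + ε • 1 + c • B) *ᵥ x)
      = a * x i ^ 2 + ε * (x ⬝ᵥ x) + c * (x ⬝ᵥ (B *ᵥ x)) := by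
  simp only [add_mulVec, smul_mulVec, one_mulVec, dotProduct_add, dotProduct_smul, smul_eq_mul,
    dotProduct_single_one_mulVec]
  ring

end

lemma posDef_smul_single_add_smul_one_add_smul_single_add_single {ι : Type*} [Fintype ι]
    [DecidableEq ι] {i j : ι} {a ε c : ℝ} (hε : 0 < ε) (hc : c ^ 2 ≤ a * ε / 2) :
    (a • single i i 1 + ε • 1 + c • (single i j 1 + single j i 1) : Matrix ι ι ℝ).PosDef := by
  refine posDef_iff_dotProduct_mulVec.2 ⟨?_, fun x hx => ?_⟩
  · simp only [IsHermitian, conjTranspose_add, conjTranspose_smul, conjTranspose_single,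
      conjTranspose_one, star_trivial]
    rw [add_comm (single j i (1 : ℝ))]
  rw [star_trivial, dotProduct_mulVec_smul_single_add_smul_one_add_smul]
  simp only [add_mulVec, dotProduct_add, dotProduct_single_one_mulVec]
  have hxx : 0 < x ⬝ᵥ x := dotProduct_self_star_pos_iff.2 hx
  have hxj : x j ^ 2 ≤ x ⬝ᵥ x := by
    simpa [dotProduct, sq] using
      Finset.single_le_sum (fun k _ => mul_self_nonneg (x k)) (Finset.mem_univ j)
  -- `(ε/2) · (a s² + 2c s t + (ε/2) t²) = (ε/2 · t + c s)² + (a ε/2 - c²) s²`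
  have hplane : 0 ≤ a * x i ^ 2 + 2 * c * x i * x j + ε / 2 * x j ^ 2 := by
    nlinarith [sq_nonneg (ε / 2 * x j + c * x i), mul_nonneg (sub_nonneg.2 hc) (sq_nonneg (x i))]
  nlinarith

lemma eq_zero_of_forall_pos_abs_le_mul {K : Type*} [Field K] [LinearOrder K]
    [IsStrictOrderedRing K] {q s : K} (h : ∀ ε > 0, |q| ≤ ε * s) : q = 0 := by
  have hs : 0 ≤ s := by simpa using (abs_nonneg q).trans (h 1 one_pos)
  refine abs_nonpos_iff.1 (le_of_forall_pos_le_add fun δ hδ => ?_)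
  calc |q| ≤ δ / (s + 1) * s := h _ (by positivity)
    _ ≤ δ := by rw [div_mul_eq_mul_div, div_le_iff₀ (by positivity)]; nlinarith
    _ = 0 + δ := (zero_add δ).symm

lemma coe_symE (n : ℕ) (i : Fin n) : (symE n i : Matrix (Fin n) (Fin n) ℝ) = single i i 1 := rfl

lemma coe_sum_symE (n : ℕ) : ((∑ k, symE n k : SymMat n) : Matrix (Fin n) (Fin n) ℝ) = 1 := by
  simp only [Submodule.coe_sum, coe_symE, sum_single_one]

theorem stmt14_general (n : ℕ) (T : SymMat n →ₗ[ℝ] SymMat n)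
    (hT : ∀ A : SymMat n, (A : Matrix (Fin n) (Fin n) ℝ).PosDef →
      ((T A : Matrix (Fin n) (Fin n) ℝ)).PosDef)
    (hE : ∀ k : Fin n, T (symE n k) = symE n k)
    (i j : Fin n)
    (A : Matrix (Fin n) (Fin n) ℝ) (hA : A = (T (symEE n i j) : Matrix (Fin n) (Fin n) ℝ)) :
    ∀ y : Fin n → ℝ, y i = 0 → y ⬝ᵥ (A *ᵥ y) = 0 := by
  intro y hyi
  have hform : ∀ ε > 0, ∀ c : ℝ, c ^ 2 = 1 → 0 ≤ ε * (y ⬝ᵥ y) + c * (y ⬝ᵥ (A *ᵥ y)) := by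
    intro ε hε c hc
    set M : SymMat n := (2 / ε) • symE n i + ε • ∑ k, symE n k + c • symEE n i j
    have hM : (M : Matrix (Fin n) (Fin n) ℝ).PosDef := by
      simp only [M, Submodule.coe_add, Submodule.coe_smul, coe_sum_symE]
      exact posDef_smul_single_add_smul_one_add_smul_single_add_single hε
        (by rw [hc, div_mul_cancel₀ _ hε.ne', div_self two_ne_zero])
    have hTM : (T M : Matrix (Fin n) (Fin n) ℝ) = (2 / ε) • single i i 1 + ε • 1 + c • A := by
      simp only [M, map_add, map_smul, map_sum, hE, hA, Submodule.coe_add, Submodule.coe_smul,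
        coe_sum_symE, coe_symE]
    have h := (hT M hM).posSemidef.dotProduct_mulVec_nonneg y
    rw [star_trivial, hTM, dotProduct_mulVec_smul_single_add_smul_one_add_smul, hyi] at h
    simpa using h
  refine eq_zero_of_forall_pos_abs_le_mul (s := y ⬝ᵥ y) fun ε hε => abs_le.2 ⟨?_, ?_⟩
  · linarith [hform ε hε 1 (one_pow 2)]
  · linarith [hform ε hε (-1) (by norm_num)]

/-- Let `T : Sₙ(ℝ) → Sₙ(ℝ)` be linear, preserving positive definiteness,
with `T(E_kk) = E_kk` for all `k`.  Fix `i ≠ j` and set `A = T(E_ij + E_ji)`.  Then for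
every `y ∈ ℝⁿ` with `y i = 0` one has `⟨A y, y⟩ = 0`. -/
theorem stmt14 (n : ℕ) (T : SymMat n →ₗ[ℝ] SymMat n)
    (hT : ∀ A : SymMat n, (A : Matrix (Fin n) (Fin n) ℝ).PosDef →
      ((T A : Matrix (Fin n) (Fin n) ℝ)).PosDef)
    (hE : ∀ k : Fin n, T (symE n k) = symE n k)
    (i j : Fin n) (hij : i ≠ j)
    (A : Matrix (Fin n) (Fin n) ℝ) (hA : A = (T (symEE n i j) : Matrix (Fin n) (Fin n) ℝ)) :
    ∀ y : Fin n → ℝ, y i = 0 → y ⬝ᵥ (A *ᵥ y) = 0 :=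
  stmt14_general n T hT hE i j A hA
end
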